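/- Let t₀, c₁, c₂ be real constants. Define u(η,t) = [ log(sinh η) + c₁·log(tanh(η/2)) + c₂ ] / (t₀ − t). Then for every η > 0 and every real t ≠ t₀, u satisfies the classical nonlinear diffusion equation ∂u/∂t (η,t) = (u(η,t)/sinh η) · ∂/∂η[ sinh η · ∂u/∂η (η,t) ]. -/

import Mathlib

/-!
Separation of variables: with `F η = log (sinh η) + c₁ log (tanh (η/2)) + c₂` one has
`sinh η · F' η = cosh η + c₁`, so `Δ_H F = 1`. Hence `u = F / (t₀ - t)` satisfies
`∂ₜu = F / (t₀ - t)² = u · Δ_H u`.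
-/

open Real

namespace Real

theorem hasDerivAt_tanh (x : ℝ) : HasDerivAt tanh (1 / cosh x ^ 2) x := by
  have h := (hasDerivAt_sinh x).div (hasDerivAt_cosh x) (cosh_pos x).ne'
  rw [show sinh / cosh = tanh from funext fun y => (tanh_eq_sinh_div_cosh y).symm] at h
  refine h.congr_deriv ?_
  rw [← cosh_sq_sub_sinh_sq x]
  ring

theorem hasDerivAt_log_tanh_half {x : ℝ} (hx : 0 < x) :
    HasDerivAt (fun y => log (tanh (y / 2))) (1 / sinh x) x := by
  have hs : 0 < sinh (x / 2) := sinh_pos_iff.mpr (half_pos hx)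
  have hhalf : HasDerivAt (fun y => y / 2) (1 / 2) x := (hasDerivAt_id' x).div_const 2
  have htanh : HasDerivAt (fun y => tanh (y / 2)) (1 / cosh (x / 2) ^ 2 * (1 / 2)) x := by
    exact (hasDerivAt_tanh (x / 2)).comp x hhalf
  have h := htanh.log (by rw [tanh_eq_sinh_div_cosh]; positivity)
  convert h using 1
  rw [show sinh x = sinh (2 * (x / 2)) by ring_nf, sinh_two_mul, tanh_eq_sinh_div_cosh]
  field_simp

end Real

noncomputable def hypProfile (c₁ c₂ η : ℝ) : ℝ :=
  log (sinh η) + c₁ * log (tanh (η / 2)) + c₂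

theorem hasDerivAt_hypProfile (c₁ c₂ : ℝ) {x : ℝ} (hx : 0 < x) :
    HasDerivAt (hypProfile c₁ c₂) ((cosh x + c₁) / sinh x) x := by
  have hs : sinh x ≠ 0 := (sinh_pos_iff.mpr hx).ne'
  have h := (((hasDerivAt_sinh x).log hs).add
    ((hasDerivAt_log_tanh_half hx).const_mul c₁)).add_const c₂
  exact h.congr_deriv (by ring)

theorem sinh_mul_deriv_hypProfile (c₁ c₂ : ℝ) {x : ℝ} (hx : 0 < x) :
    sinh x * deriv (hypProfile c₁ c₂) x = cosh x + c₁ := by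
  rw [(hasDerivAt_hypProfile c₁ c₂ hx).deriv]
  field_simp [(sinh_pos_iff.mpr hx).ne']

theorem deriv_sinh_mul_deriv_hypProfile (c₁ c₂ : ℝ) {η : ℝ} (hη : 0 < η) :
    deriv (fun s => sinh s * deriv (hypProfile c₁ c₂) s) η = sinh η := by
  have heq : (fun s => sinh s * deriv (hypProfile c₁ c₂) s) =ᶠ[nhds η] fun s => cosh s + c₁ := by
    filter_upwards [Ioi_mem_nhds hη] with s hs using sinh_mul_deriv_hypProfile c₁ c₂ hs
  rw [heq.deriv_eq, deriv_add_const, Real.deriv_cosh]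

/-- `u(η,t) = (log(sinh η) + c₁ log(tanh(η/2)) + c₂)/(t₀ - t)` solves
`∂ₜu = u·Δ_H u` for `η > 0` and `t ≠ t₀`. -/
theorem stmt_11 (t₀ c₁ c₂ : ℝ)
    (u : ℝ → ℝ → ℝ)
    (hu : ∀ η t : ℝ, u η t =
      (Real.log (Real.sinh η) + c₁ * Real.log (Real.tanh (η / 2)) + c₂) / (t₀ - t)) :
    ∀ η t : ℝ, 0 < η → t ≠ t₀ →
      deriv (fun s : ℝ => u η s) t =
        (u η t / Real.sinh η) *
          deriv (fun s : ℝ => Real.sinh s * deriv (fun r : ℝ => u r t) s) η := by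
  obtain rfl : u = fun η t => hypProfile c₁ c₂ η / (t₀ - t) := funext₂ hu
  intro η t hη ht
  have hts : t₀ - t ≠ 0 := sub_ne_zero.mpr ht.symm
  have htime : deriv (fun s => hypProfile c₁ c₂ η / (t₀ - s)) t
      = hypProfile c₁ c₂ η / (t₀ - t) ^ 2 := by
    have h := (hasDerivAt_const t (hypProfile c₁ c₂ η)).div ((hasDerivAt_id' t).const_sub t₀) hts
    refine h.deriv.trans ?_
    ring
  have hspace : deriv (fun s => sinh s * deriv (fun r => hypProfile c₁ c₂ r / (t₀ - t)) s) η
      = sinh η / (t₀ - t) := by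
    simp only [deriv_div_const, mul_div_assoc']
    rw [deriv_sinh_mul_deriv_hypProfile c₁ c₂ hη]
  rw [htime, hspace]
  field_simp [(sinh_pos_iff.mpr hη).ne']
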